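/- Consider a symmetric set packing game with multiplicities x_1,…,x_n ≥ 1 and a real α ≥ 1. Let S = (S_1,…,S_n) be a feasible profile such that for every player i and every T ⊆ J \ (S_1 ∪ … ∪ S_{i−1}) that is a union of x_i pairwise disjoint members of 𝒮, α·w(S_i) ≥ w(T). Then OPT(J) ≤ (e^{1/α}/(e^{1/α}−1))·w(S). That is, the sequential price of anarchy of symmetric set packing games under α-approximate subgame perfect equilibria is at most e^{1/α}/(e^{1/α}−1). -/

import Mathlib

/-!
Let `T = F_1 ∪ … ∪ F_X` be an optimal packing, `X = ∑ x_k`, and let `U_i = S_1 ∪ … ∪ S_{i-1}`.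
The pieces `F_a \ U_i` are still `X` disjoint members of `𝒮`, avoid `U_i`, and weigh at least
`w(T) - w(U_i)`; the best `x_i` of them are an admissible deviation for player `i` that weighs at
least `x_i / X` of that. So `w(S_i) ≥ c_i (OPT - w(U_i))` with `c_i = x_i / (α X)`, whence
`OPT - w(S) ≤ OPT ∏ (1 - c_i) ≤ OPT e^{-∑ c_i} = OPT e^{-1/α}`.
-/

/-- `IsUnionOf 𝒮 m T` says that `T` is a union of `m` pairwise disjoint members
of the collection `𝒮`. -/
def IsUnionOf {ι : Type} [DecidableEq ι] (𝒮 : Set (Finset ι)) (m : ℕ)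
    (T : Finset ι) : Prop :=
  ∃ f : Fin m → Finset ι, (∀ a, f a ∈ 𝒮) ∧
    (∀ a b, a ≠ b → Disjoint (f a) (f b)) ∧ T = Finset.univ.biUnion f

open Finset Real

theorem Finset.exists_subset_card_eq_mul_sum_le {κ R : Type*} [DecidableEq κ]
    [CommRing R] [LinearOrder R] [IsStrictOrderedRing R] (v : κ → R) (s : Finset κ) {m : ℕ}
    (hm : m ≤ #s) : ∃ A ⊆ s, #A = m ∧ m * ∑ a ∈ s, v a ≤ #s * ∑ a ∈ A, v a := by
  induction s using Finset.induction_on_min_value v generalizing m with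
  | empty =>
    obtain rfl : m = 0 := by simpa using hm
    exact ⟨∅, subset_rfl, rfl, by simp⟩
  | insert a s has hmin ih =>
    rw [card_insert_of_notMem has] at hm ⊢
    rcases hm.eq_or_lt with rfl | hm
    · exact ⟨insert a s, subset_rfl, card_insert_of_notMem has, le_rfl⟩
    obtain ⟨A, hAs, hAcard, hA⟩ := ih (Nat.lt_succ_iff.mp hm)
    have ha : m * v a ≤ ∑ b ∈ A, v b := by
      simpa [hAcard] using card_nsmul_le_sum A v (v a) fun b hb => hmin b (hAs hb)
    refine ⟨A, hAs.trans (subset_insert a s), hAcard, ?_⟩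
    rw [sum_insert has]
    push_cast
    linear_combination hA + ha

theorem Finset.sub_sum_le_mul_prod_one_sub {κ R : Type*} [LinearOrder κ]
    [CommRing R] [LinearOrder R] [IsStrictOrderedRing R] (M : R) (W c : κ → R) (s : Finset κ)
    (hc : ∀ i ∈ s, c i ≤ 1) (h : ∀ i ∈ s, c i * (M - ∑ k ∈ s with k < i, W k) ≤ W i) :
    M - ∑ i ∈ s, W i ≤ M * ∏ i ∈ s, (1 - c i) := by
  induction s using Finset.induction_on_max with
  | empty => simp
  | insert a s hlt ih =>
    have has : a ∉ s := fun ha => lt_irrefl a (hlt a ha)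
    have hbefore : ∀ i ∈ s, {k ∈ insert a s | k < i} = {k ∈ s | k < i} := fun i hi => by
      rw [filter_insert, if_neg (hlt i hi).not_gt]
    have hbefore_a : {k ∈ insert a s | k < a} = s := by
      rw [filter_insert, if_neg (lt_irrefl a), filter_true_of_mem hlt]
    have ih := ih (fun i hi => hc i (mem_insert_of_mem hi)) fun i hi => by
      simpa only [hbefore i hi] using h i (mem_insert_of_mem hi)
    have ha := h a (mem_insert_self a s)
    rw [hbefore_a] at ha
    rw [sum_insert has, prod_insert has]
    nlinarith [mul_le_mul_of_nonneg_left ih (sub_nonneg.2 (hc a (mem_insert_self a s)))]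

theorem Real.prod_one_sub_le_exp_neg_sum {κ : Type*} (s : Finset κ) (c : κ → ℝ)
    (hc : ∀ i ∈ s, c i ≤ 1) : ∏ i ∈ s, (1 - c i) ≤ exp (-∑ i ∈ s, c i) := by
  rw [← sum_neg_distrib, exp_sum]
  exact prod_le_prod (fun i hi => sub_nonneg.2 (hc i hi)) fun i _ => one_sub_le_exp_neg (c i)

theorem Real.le_exp_div_exp_sub_one_mul {M W t : ℝ} (ht : 0 < t) (h : M - W ≤ M * exp (-t)) :
    M ≤ exp t / (exp t - 1) * W := by
  have hE : 1 < exp t := one_lt_exp_iff.2 ht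
  have hM : M * exp (-t) * exp t = M := by
    rw [mul_assoc, ← exp_add, neg_add_cancel, exp_zero, mul_one]
  rw [div_mul_eq_mul_div, le_div_iff₀ (by linarith)]
  nlinarith [mul_le_mul_of_nonneg_right h (exp_pos t).le]

namespace IsUnionOf

variable {ι : Type} [DecidableEq ι] {𝒮 : Set (Finset ι)} {m : ℕ} {T : Finset ι}

theorem subset {J : Finset ι} (hJ : ∀ A ∈ 𝒮, A ⊆ J) (h : IsUnionOf 𝒮 m T) : T ⊆ J := by
  obtain ⟨f, hf, -, rfl⟩ := h
  exact biUnion_subset.2 fun a _ => hJ _ (hf a)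

theorem sdiff (hdc : ∀ A ∈ 𝒮, ∀ T, T ⊆ A → T ∈ 𝒮) (h : IsUnionOf 𝒮 m T) (U : Finset ι) :
    IsUnionOf 𝒮 m (T \ U) := by
  obtain ⟨f, hf, hdisj, rfl⟩ := h
  refine ⟨fun a => f a \ U, fun a => hdc _ (hf a) _ sdiff_subset,
    fun a b hab => (hdisj a b hab).mono sdiff_subset sdiff_subset, ?_⟩
  ext j
  simp only [mem_sdiff, mem_biUnion, mem_univ, true_and]
  tauto

theorem _root_.isUnionOf_biUnion {κ : Type*} (A : Finset κ) (g : κ → Finset ι)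
    (hg : ∀ a ∈ A, g a ∈ 𝒮) (hdisj : (A : Set κ).PairwiseDisjoint g) :
    IsUnionOf 𝒮 #A (A.biUnion g) := by
  refine ⟨fun k => g (A.equivFin.symm k), fun k => hg _ (A.equivFin.symm k).2,
    fun a b hab => hdisj (A.equivFin.symm a).2 (A.equivFin.symm b).2
      fun h => hab (A.equivFin.symm.injective (Subtype.ext h)), ?_⟩
  ext j
  simp only [mem_biUnion, mem_univ, true_and]
  constructor
  · rintro ⟨a, ha, hj⟩
    exact ⟨A.equivFin ⟨a, ha⟩, by simpa using hj⟩
  · rintro ⟨k, hj⟩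
    exact ⟨_, (A.equivFin.symm k).2, hj⟩

theorem exists_subset_mul_sum_le {R : Type*} [CommRing R] [LinearOrder R] [IsStrictOrderedRing R]
    {X : ℕ} (h : IsUnionOf 𝒮 X T) (hm : m ≤ X) (w : ι → R) :
    ∃ T' ⊆ T, IsUnionOf 𝒮 m T' ∧ m * ∑ j ∈ T, w j ≤ X * ∑ j ∈ T', w j := by
  obtain ⟨f, hf, hdisj, rfl⟩ := h
  have hpd (A : Finset (Fin X)) : (A : Set (Fin X)).PairwiseDisjoint f :=
    fun a _ b _ hab => hdisj a b hab
  obtain ⟨A, -, rfl, hA⟩ :=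
    exists_subset_card_eq_mul_sum_le (fun a => ∑ j ∈ f a, w j) univ (by simpa using hm)
  refine ⟨A.biUnion f, biUnion_subset_biUnion_of_subset_left f (subset_univ A),
    isUnionOf_biUnion A f (fun a _ => hf a) (hpd A), ?_⟩
  rw [sum_biUnion (hpd univ), sum_biUnion (hpd A)]
  simpa using hA

theorem mul_sub_le_of_forall_sum_le {J U : Finset ι} {w : ι → ℝ} {X : ℕ} {B : ℝ}
    (hw : ∀ j ∈ J, 0 ≤ w j) (hdc : ∀ A ∈ 𝒮, ∀ T, T ⊆ A → T ∈ 𝒮)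
    (hT : IsUnionOf 𝒮 X T) (hTJ : T ⊆ J) (hUJ : U ⊆ J) (hm : m ≤ X)
    (hB : ∀ T' ⊆ J \ U, IsUnionOf 𝒮 m T' → ∑ j ∈ T', w j ≤ B) :
    m * (∑ j ∈ T, w j - ∑ j ∈ U, w j) ≤ X * B := by
  obtain ⟨T', hT'T, hT', hmT'⟩ := (hT.sdiff hdc U).exists_subset_mul_sum_le hm w
  have hloss : ∑ j ∈ T, w j - ∑ j ∈ U, w j ≤ ∑ j ∈ T \ U, w j := by
    have := sum_le_sum_of_subset_of_nonneg (inter_subset_right (s₁ := T))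
      fun j hj _ => hw j (hUJ hj)
    linarith [sum_inter_add_sum_sdiff T U w]
  calc (m : ℝ) * (∑ j ∈ T, w j - ∑ j ∈ U, w j) ≤ m * ∑ j ∈ T \ U, w j := by gcongr
    _ ≤ X * ∑ j ∈ T', w j := hmT'
    _ ≤ X * B := by gcongr; exact hB T' (hT'T.trans (sdiff_subset_sdiff hTJ subset_rfl)) hT'

end IsUnionOf

theorem symmetric_set_packing_seq_poa_upper_bound_general
    {ι : Type} [DecidableEq ι] (J : Finset ι) (w : ι → ℝ)
    (hw : ∀ j ∈ J, 0 ≤ w j) (n : ℕ) (hn : 1 ≤ n)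
    (𝒮 : Set (Finset ι))
    (hJ : ∀ A ∈ 𝒮, A ⊆ J)
    (hdc : ∀ A ∈ 𝒮, ∀ T, T ⊆ A → T ∈ 𝒮)
    (x : Fin n → ℕ) (hx : ∀ i, 1 ≤ x i)
    (α : ℝ) (hα : 1 ≤ α)
    (S : Fin n → Finset ι)
    (hS : ∀ i, IsUnionOf 𝒮 (x i) (S i))
    (hSdisj : ∀ i k, i ≠ k → Disjoint (S i) (S k))
    (OPTJ : ℝ)
    (hOPT : IsGreatest
      {v : ℝ | ∃ T, T ⊆ J ∧ IsUnionOf 𝒮 (∑ k, x k) T ∧ v = ∑ j ∈ T, w j} OPTJ)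
    (hgreedy : ∀ i, ∀ T, T ⊆ J \ ((Finset.univ.filter (fun j => j < i)).biUnion S) →
      IsUnionOf 𝒮 (x i) T → ∑ j ∈ T, w j ≤ α * ∑ j ∈ S i, w j) :
    OPTJ ≤ (Real.exp (1 / α) / (Real.exp (1 / α) - 1)) * ∑ i, ∑ t ∈ S i, w t := by
  obtain ⟨⟨T, hTJ, hT, rfl⟩, -⟩ := hOPT
  set X := ∑ k, x k
  have hxX (i : Fin n) : x i ≤ X := single_le_sum (fun k _ => Nat.zero_le (x k)) (mem_univ i)
  have hX : 0 < X := (hx ⟨0, hn⟩).trans (hxX _)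
  have hαX : (0 : ℝ) < α * X := by positivity
  set c : Fin n → ℝ := fun i => x i / (α * X)
  have hc (i : Fin n) (_ : i ∈ univ) : c i ≤ 1 := by
    rw [div_le_one hαX]
    nlinarith [(Nat.cast_le (α := ℝ)).2 (hxX i)]
  have hshare (i : Fin n) (_ : i ∈ univ) :
      c i * (∑ j ∈ T, w j - ∑ k ∈ univ with k < i, ∑ j ∈ S k, w j) ≤ ∑ j ∈ S i, w j := by
    have h := hT.mul_sub_le_of_forall_sum_le hw hdc hTJ
      (biUnion_subset.2 fun k _ => (hS k).subset hJ) (hxX i) (hgreedy i)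
    rw [sum_biUnion fun k _ l _ hkl => hSdisj k l hkl] at h
    rw [div_mul_eq_mul_div, div_le_iff₀ hαX]
    linarith
  have hsum_c : ∑ i, c i = 1 / α := by
    rw [← sum_div, ← Nat.cast_sum, div_mul_cancel_right₀ (by positivity), one_div]
  refine le_exp_div_exp_sub_one_mul (by positivity) ?_
  calc ∑ j ∈ T, w j - ∑ i, ∑ t ∈ S i, w t ≤ (∑ j ∈ T, w j) * ∏ i, (1 - c i) :=
        sub_sum_le_mul_prod_one_sub _ _ c univ hc hshare
    _ ≤ (∑ j ∈ T, w j) * exp (-(1 / α)) := by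
        rw [← hsum_c]
        exact mul_le_mul_of_nonneg_left (prod_one_sub_le_exp_neg_sum univ c hc)
          (sum_nonneg fun j hj => hw j (hTJ hj))

/-- In a symmetric set packing game with multiplicities
`x_1,…,x_n ≥ 1` and a real `α ≥ 1`: if the feasible profile `S = (S_1,…,S_n)`
satisfies the sequential `α`-greedy condition (for every player `i` and every
`T ⊆ J \ (S_1 ∪ … ∪ S_{i−1})` that is a union of `x_i` pairwise disjoint members of
`𝒮`, `α·w(S_i) ≥ w(T)`), then `OPT(J) ≤ (e^{1/α}/(e^{1/α}−1))·w(S)`; that is, the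
sequential price of anarchy of symmetric set packing games under `α`-approximate
subgame perfect equilibria is at most `e^{1/α}/(e^{1/α}−1)`. -/
theorem symmetric_set_packing_seq_poa_upper_bound
    {ι : Type} [DecidableEq ι] (J : Finset ι) (w : ι → ℝ)
    (hw : ∀ j ∈ J, 0 ≤ w j) (n : ℕ) (hn : 1 ≤ n)
    (𝒮 : Set (Finset ι))
    (hJ : ∀ A ∈ 𝒮, A ⊆ J)
    (hdc : ∀ A ∈ 𝒮, ∀ T, T ⊆ A → T ∈ 𝒮)
    (hempty : ∅ ∈ 𝒮)
    (x : Fin n → ℕ) (hx : ∀ i, 1 ≤ x i)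
    (α : ℝ) (hα : 1 ≤ α)
    (S : Fin n → Finset ι)
    (hS : ∀ i, IsUnionOf 𝒮 (x i) (S i))
    (hSdisj : ∀ i k, i ≠ k → Disjoint (S i) (S k))
    (OPTJ : ℝ)
    (hOPT : IsGreatest
      {v : ℝ | ∃ T, T ⊆ J ∧ IsUnionOf 𝒮 (∑ k, x k) T ∧ v = ∑ j ∈ T, w j} OPTJ)
    (hgreedy : ∀ i, ∀ T, T ⊆ J \ ((Finset.univ.filter (fun j => j < i)).biUnion S) →
      IsUnionOf 𝒮 (x i) T → ∑ j ∈ T, w j ≤ α * ∑ j ∈ S i, w j) :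
    OPTJ ≤ (Real.exp (1 / α) / (Real.exp (1 / α) - 1)) * ∑ i, ∑ t ∈ S i, w t :=
  symmetric_set_packing_seq_poa_upper_bound_general J w hw n hn 𝒮 hJ hdc x hx α hα S hS hSdisj OPTJ
    hOPT hgreedy
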